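/- arXiv:0907.2605 — 5 statements merged into one kernel-verified Lean document; each statement's English description precedes it below -/
import Mathlib

section
/- Let ω : (0,∞) → (0,∞) and define p_ω = sup{ p > 0 : ω(st) ≤ t^p ω(s) for all s > 0 and t ∈ (0,1) }. If this supremum is finite and the defining set is nonempty, then ω is of strictly lower type p_ω, i.e., ω(st) ≤ t^{p_ω} ω(s) for all s > 0 and t ∈ (0,1). In other words, the strictly critical lower type index is attained. -/
open Set

def IsStrictlyLowerType (ω : ℝ → ℝ) (p : ℝ) : Prop :=
  ∀ s : ℝ, 0 < s → ∀ t ∈ Ioo (0 : ℝ) 1, ω (s * t) ≤ t ^ p * ω s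

lemma isClosed_setOf_le_rpow_mul {t : ℝ} (ht : 0 < t) (a b : ℝ) :
    IsClosed {p : ℝ | a ≤ t ^ p * b} :=
  isClosed_le continuous_const
    ((continuous_const.rpow continuous_id fun _ => Or.inl ht.ne').mul continuous_const)

lemma isClosed_setOf_isStrictlyLowerType (ω : ℝ → ℝ) :
    IsClosed {p : ℝ | IsStrictlyLowerType ω p} := by
  simp only [IsStrictlyLowerType, ofPred_forall]
  exact isClosed_iInter fun s => isClosed_iInter fun _ => isClosed_iInter fun t =>
    isClosed_iInter fun ht => isClosed_setOf_le_rpow_mul ht.1 _ _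

theorem strictly_lower_type_index_attained_general (ω : ℝ → ℝ)
    (S : Set ℝ)
    (hS : S = {p : ℝ | 0 < p ∧ ∀ s : ℝ, 0 < s → ∀ t : ℝ, t ∈ Set.Ioo (0:ℝ) 1 →
      ω (s * t) ≤ t ^ p * ω s})
    (hne : S.Nonempty) (hbdd : BddAbove S) :
    ∀ s : ℝ, 0 < s → ∀ t : ℝ, t ∈ Set.Ioo (0:ℝ) 1 →
      ω (s * t) ≤ t ^ (sSup S) * ω s := by
  have hsub : S ⊆ {p | IsStrictlyLowerType ω p} := by
    rw [hS]
    exact fun _ hp => hp.2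
  exact (isClosed_setOf_isStrictlyLowerType ω).closure_subset_iff.2 hsub
    (csSup_mem_closure hne hbdd)

/-- The strictly critical lower type index is attained. -/
theorem strictly_lower_type_index_attained (ω : ℝ → ℝ)
    (hpos : ∀ t : ℝ, 0 < t → 0 < ω t)
    (S : Set ℝ)
    (hS : S = {p : ℝ | 0 < p ∧ ∀ s : ℝ, 0 < s → ∀ t : ℝ, t ∈ Set.Ioo (0:ℝ) 1 →
      ω (s * t) ≤ t ^ p * ω s})
    (hne : S.Nonempty) (hbdd : BddAbove S) :
    ∀ s : ℝ, 0 < s → ∀ t : ℝ, t ∈ Set.Ioo (0:ℝ) 1 →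
      ω (s * t) ≤ t ^ (sSup S) * ω s :=
  strictly_lower_type_index_attained_general ω S hS hne hbdd
end

section
/- Let 0 < p₀ ≤ p₁ ≤ 1 and let ω : (0,∞) → (0,∞) be strictly increasing and bijective onto (0,∞), and define ρ(t) = t^{-1} / ω^{-1}(t^{-1}) for t > 0. Then ω is of type (p₀, p₁) (i.e., of lower type p₀ and upper type p₁) if and only if ρ is of type (1/p₁ − 1, 1/p₀ − 1). -/
/-- Upper type `q` for a positive function on `(0,∞)`. -/
def UpperType (f : ℝ → ℝ) (q : ℝ) : Prop :=
  ∃ C : ℝ, 0 < C ∧ ∀ t : ℝ, 1 ≤ t → ∀ s : ℝ, 0 < s → f (s * t) ≤ C * t ^ q * f s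

/-- Lower type `q` for a positive function on `(0,∞)`. -/
def LowerType (f : ℝ → ℝ) (q : ℝ) : Prop :=
  ∃ C : ℝ, 0 < C ∧ ∀ t : ℝ, 0 < t → t ≤ 1 → ∀ s : ℝ, 0 < s → f (s * t) ≤ C * t ^ q * f s

/-!
Substituting `s = ω⁻¹(a t)` and `τ = (C t)^(-1/p)` in a bound `ω(s τ) ≤ C τ^p ω(s)` gives
`ω(s τ) ≤ a`, and applying the increasing map `ω⁻¹` yields `ω⁻¹(a t) ≤ (C t)^(1/p) ω⁻¹(a)`.
Thus a lower (upper) type `p` of `ω` becomes an upper (lower) type `1/p` of `ω⁻¹`, and conversely.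
The substitution `s = (u t)⁻¹` shows that `ρ` has type `q - 1` exactly when `ω⁻¹` has type `q`.
-/

open Set Real

theorem LowerType.exists_one_le {f : ℝ → ℝ} {q : ℝ} (hf : MapsTo f (Ioi 0) (Ioi 0))
    (h : LowerType f q) :
    ∃ C, 1 ≤ C ∧ ∀ t, 0 < t → t ≤ 1 → ∀ s, 0 < s → f (s * t) ≤ C * t ^ q * f s := by
  obtain ⟨C, -, hC⟩ := h
  refine ⟨max C 1, le_max_right C 1, fun t ht ht₁ s hs => (hC t ht ht₁ s hs).trans ?_⟩
  have : 0 < f s := hf hs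
  gcongr
  exact le_max_left C 1

theorem UpperType.exists_one_le {f : ℝ → ℝ} {q : ℝ} (hf : MapsTo f (Ioi 0) (Ioi 0))
    (h : UpperType f q) :
    ∃ C, 1 ≤ C ∧ ∀ t, 1 ≤ t → ∀ s, 0 < s → f (s * t) ≤ C * t ^ q * f s := by
  obtain ⟨C, -, hC⟩ := h
  refine ⟨max C 1, le_max_right C 1, fun t ht s hs => (hC t ht s hs).trans ?_⟩
  have : 0 < f s := hf hs
  have : 0 < t := one_pos.trans_le ht
  gcongr
  exact le_max_left C 1

theorem apply_mul_le_rpow_inv_mul_apply {f g : ℝ → ℝ} {q C t a : ℝ}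
    (hf : MapsTo f (Ioi 0) (Ioi 0)) (hg : MapsTo g (Ioi 0) (Ioi 0))
    (hfg : InvOn g f (Ioi 0) (Ioi 0)) (hg_mono : MonotoneOn g (Ioi 0))
    (hq : q ≠ 0) (hC : 0 < C) (ht : 0 < t) (ha : 0 < a)
    (h : f (g (a * t) * ((C * t) ^ q⁻¹)⁻¹) ≤ C * (((C * t) ^ q⁻¹)⁻¹) ^ q * f (g (a * t))) :
    g (a * t) ≤ (C * t) ^ q⁻¹ * g a := by
  set r := (C * t) ^ q⁻¹
  have hr : 0 < r := by positivity
  have hat : 0 < a * t := mul_pos ha ht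
  have hx : 0 < g (a * t) * r⁻¹ := mul_pos (hg hat) (inv_pos.2 hr)
  have h_rhs : C * r⁻¹ ^ q * f (g (a * t)) = a := by
    rw [hfg.2 hat, inv_rpow hr.le, rpow_inv_rpow (by positivity) hq]
    field_simp
  have : g (a * t) * r⁻¹ ≤ g a :=
    calc g (a * t) * r⁻¹ = g (f (g (a * t) * r⁻¹)) := (hfg.1 hx).symm
      _ ≤ g a := hg_mono (hf hx) ha (h.trans_eq h_rhs)
  rwa [mul_inv_le_iff₀ hr, mul_comm (g a)] at this

theorem LowerType.upperType_inv {f g : ℝ → ℝ} {q : ℝ}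
    (hf : MapsTo f (Ioi 0) (Ioi 0)) (hg : MapsTo g (Ioi 0) (Ioi 0))
    (hfg : InvOn g f (Ioi 0) (Ioi 0)) (hg_mono : MonotoneOn g (Ioi 0))
    (hq : 0 < q) (h : LowerType f q) : UpperType g q⁻¹ := by
  obtain ⟨C, hC₁, hC⟩ := h.exists_one_le hf
  refine ⟨C ^ q⁻¹, by positivity, fun t ht a ha => ?_⟩
  have ht₀ : 0 < t := one_pos.trans_le ht
  have hr : 1 ≤ (C * t) ^ q⁻¹ :=
    one_le_rpow (one_le_mul_of_one_le_of_one_le hC₁ ht) (by positivity)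
  calc g (a * t) ≤ (C * t) ^ q⁻¹ * g a :=
        apply_mul_le_rpow_inv_mul_apply hf hg hfg hg_mono hq.ne' (by positivity) ht₀ ha <|
          hC _ (by positivity) (inv_le_one_of_one_le₀ hr) _ (hg (mul_pos ha ht₀))
    _ = C ^ q⁻¹ * t ^ q⁻¹ * g a := by rw [mul_rpow (by positivity) ht₀.le]

theorem UpperType.lowerType_inv {f g : ℝ → ℝ} {q : ℝ}
    (hf : MapsTo f (Ioi 0) (Ioi 0)) (hg : MapsTo g (Ioi 0) (Ioi 0))
    (hfg : InvOn g f (Ioi 0) (Ioi 0)) (hg_mono : MonotoneOn g (Ioi 0))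
    (hq : 0 < q) (h : UpperType f q) : LowerType g q⁻¹ := by
  obtain ⟨C, hC₁, hC⟩ := h.exists_one_le hf
  refine ⟨C ^ q⁻¹, by positivity, fun t ht ht₁ a ha => ?_⟩
  have hCt : 0 < C * t := by positivity
  rw [← mul_rpow (by positivity) ht.le]
  rcases le_or_gt (C * t) 1 with hCt₁ | hCt₁
  · have hr : (C * t) ^ q⁻¹ ≤ 1 := rpow_le_one hCt.le hCt₁ (by positivity)
    exact apply_mul_le_rpow_inv_mul_apply hf hg hfg hg_mono hq.ne' (by positivity) ht ha <|
      hC _ ((one_le_inv₀ (by positivity)).2 hr) _ (hg (mul_pos ha ht))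
  · calc g (a * t) ≤ g a := hg_mono (mul_pos ha ht) ha (mul_le_of_le_one_right ha.le ht₁)
      _ ≤ (C * t) ^ q⁻¹ * g a :=
        le_mul_of_one_le_left (hg ha).le (one_le_rpow hCt₁.le (by positivity))

theorem rho_mul_le_iff {g ρ : ℝ → ℝ} {q C t : ℝ} (hg : MapsTo g (Ioi 0) (Ioi 0))
    (hρ : ∀ t, 0 < t → ρ t = t⁻¹ / g t⁻¹) (ht : 0 < t) :
    (∀ s, 0 < s → ρ (s * t) ≤ C * t ^ (q - 1) * ρ s) ↔
      ∀ u, 0 < u → g (u * t) ≤ C * t ^ q * g u := by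
  have key : ∀ u, 0 < u →
      (ρ ((u * t)⁻¹ * t) ≤ C * t ^ (q - 1) * ρ (u * t)⁻¹ ↔ g (u * t) ≤ C * t ^ q * g u) := by
    intro u hu
    have hgu : 0 < g u := hg hu
    have hgut : 0 < g (u * t) := hg (mul_pos hu ht)
    rw [show (u * t)⁻¹ * t = u⁻¹ by field_simp, hρ _ (by positivity), hρ _ (by positivity),
      inv_inv, inv_inv, rpow_sub_one ht.ne',
      show C * (t ^ q / t) * (u * t / g (u * t)) = C * t ^ q * u / g (u * t) by field_simp,
      div_le_div_iff₀ hgu hgut, show C * t ^ q * u * g u = u * (C * t ^ q * g u) by ring,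
      mul_le_mul_iff_right₀ hu]
  constructor
  · exact fun h u hu => (key u hu).1 (h _ (by positivity))
  · intro h s hs
    have := (key _ (by positivity)).2 (h (s * t)⁻¹ (by positivity))
    rwa [show ((s * t)⁻¹ * t)⁻¹ = s by field_simp] at this

theorem lowerType_rho_sub_one_iff {g ρ : ℝ → ℝ} {q : ℝ} (hg : MapsTo g (Ioi 0) (Ioi 0))
    (hρ : ∀ t, 0 < t → ρ t = t⁻¹ / g t⁻¹) :
    LowerType ρ (q - 1) ↔ LowerType g q :=
  exists_congr fun _ => and_congr_right fun _ =>
    forall₃_congr fun _ ht _ => rho_mul_le_iff hg hρ ht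

theorem upperType_rho_sub_one_iff {g ρ : ℝ → ℝ} {q : ℝ} (hg : MapsTo g (Ioi 0) (Ioi 0))
    (hρ : ∀ t, 0 < t → ρ t = t⁻¹ / g t⁻¹) :
    UpperType ρ (q - 1) ↔ UpperType g q :=
  exists_congr fun _ => and_congr_right fun _ =>
    forall₂_congr fun _ ht => rho_mul_le_iff hg hρ (one_pos.trans_le ht)

theorem type_duality_omega_rho_general (ω ωinv : ℝ → ℝ) (p₀ p₁ : ℝ)
    (hp₀ : 0 < p₀) (hp₀₁ : p₀ ≤ p₁)
    (hpos : ∀ t : ℝ, 0 < t → 0 < ω t)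
    (hmono : StrictMonoOn ω (Set.Ioi (0:ℝ)))
    (hinv_pos : ∀ t : ℝ, 0 < t → 0 < ωinv t)
    (hinv₁ : ∀ t : ℝ, 0 < t → ω (ωinv t) = t)
    (hinv₂ : ∀ t : ℝ, 0 < t → ωinv (ω t) = t)
    (ρ : ℝ → ℝ) (hρ : ∀ t : ℝ, 0 < t → ρ t = t⁻¹ / ωinv t⁻¹) :
    (LowerType ω p₀ ∧ UpperType ω p₁) ↔
      (LowerType ρ (1 / p₁ - 1) ∧ UpperType ρ (1 / p₀ - 1)) := by
  have hp₁ : 0 < p₁ := hp₀.trans_le hp₀₁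
  have hω : MapsTo ω (Ioi 0) (Ioi 0) := fun t ht => hpos t ht
  have hωinv : MapsTo ωinv (Ioi 0) (Ioi 0) := fun t ht => hinv_pos t ht
  have hinv : InvOn ωinv ω (Ioi 0) (Ioi 0) := ⟨fun t ht => hinv₂ t ht, fun t ht => hinv₁ t ht⟩
  have hω_mono : MonotoneOn ω (Ioi 0) := hmono.monotoneOn
  have hωinv_mono : MonotoneOn ωinv (Ioi 0) :=
    Function.monotoneOn_of_rightInvOn_of_mapsTo hω_mono hinv.2 hωinv
  rw [lowerType_rho_sub_one_iff hωinv hρ, upperType_rho_sub_one_iff hωinv hρ, one_div, one_div]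
  constructor
  · rintro ⟨hlow, hup⟩
    exact ⟨hup.lowerType_inv hω hωinv hinv hωinv_mono hp₁,
      hlow.upperType_inv hω hωinv hinv hωinv_mono hp₀⟩
  · rintro ⟨hlow, hup⟩
    exact ⟨inv_inv p₀ ▸ hup.lowerType_inv hωinv hω hinv.symm hω_mono (inv_pos.2 hp₀),
      inv_inv p₁ ▸ hlow.upperType_inv hωinv hω hinv.symm hω_mono (inv_pos.2 hp₁)⟩

theorem type_duality_omega_rho (ω ωinv : ℝ → ℝ) (p₀ p₁ : ℝ)
    (hp₀ : 0 < p₀) (hp₀₁ : p₀ ≤ p₁) (hp₁ : p₁ ≤ 1)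
    (hpos : ∀ t : ℝ, 0 < t → 0 < ω t)
    (hmono : StrictMonoOn ω (Set.Ioi (0:ℝ)))
    (hinv_pos : ∀ t : ℝ, 0 < t → 0 < ωinv t)
    (hinv₁ : ∀ t : ℝ, 0 < t → ω (ωinv t) = t)
    (hinv₂ : ∀ t : ℝ, 0 < t → ωinv (ω t) = t)
    (ρ : ℝ → ℝ) (hρ : ∀ t : ℝ, 0 < t → ρ t = t⁻¹ / ωinv t⁻¹) :
    (LowerType ω p₀ ∧ UpperType ω p₁) ↔
      (LowerType ρ (1 / p₁ - 1) ∧ UpperType ρ (1 / p₀ - 1)) :=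
  type_duality_omega_rho_general ω ωinv p₀ p₁ hp₀ hp₀₁ hpos hmono hinv_pos hinv₁ hinv₂ ρ hρ
end

section
/- Let ω : (0,∞) → (0,∞) be concave of strictly lower type p ∈ (0,1], and define ω̃(t) = ∫₀ᵗ ω(s)/s ds for t > 0. Then ω̃ is finite, and there exists a constant C ≥ 1 such that C^{-1} ω(t) ≤ ω̃(t) ≤ C ω(t) for all t > 0. -/
open MeasureTheory Set

/-! Lower type `p` bounds `ω s / s` on `(0, t)` by `s ^ (p - 1) ω(t) / t ^ p`, whose integral is
`ω(t) / p`. Conversely, concavity and positivity keep `ω ≥ ω(t) / 3` on `(t / 2, t)` (compare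
with the chord from `t / 4` to `t`), which alone contributes `ω(t) / 6` to the integral. -/

section

variable {ω : ℝ → ℝ} {p : ℝ}

lemma concaveOn_Ioi_of_forall_le
    (hconc : ∀ s t θ : ℝ, 0 < s → 0 < t → 0 ≤ θ → θ ≤ 1 →
      θ * ω s + (1 - θ) * ω t ≤ ω (θ * s + (1 - θ) * t)) :
    ConcaveOn ℝ (Ioi 0) ω := by
  refine ⟨convex_Ioi 0, fun x hx y hy a b ha hb hab => ?_⟩
  obtain rfl : b = 1 - a := by linarith
  exact hconc x y a hx hy ha (by linarith)

lemma ConcaveOn.div_sub_mul_le {D : Set ℝ} (hω : ConcaveOn ℝ D ω) {a s t : ℝ}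
    (ha : a ∈ D) (ht : t ∈ D) (hωa : 0 ≤ ω a) (has : a ≤ s) (hst : s ≤ t) (hat : a < t) :
    (s - a) / (t - a) * ω t ≤ ω s := by
  set θ := (s - a) / (t - a)
  have hta : 0 < t - a := sub_pos.2 hat
  have hθ0 : 0 ≤ θ := div_nonneg (sub_nonneg.2 has) hta.le
  have hθ1 : θ ≤ 1 := (div_le_one hta).2 (by linarith)
  have hs : θ * t + (1 - θ) * a = s := by
    simp only [θ]; field_simp; ring
  have := hω.2 ht ha hθ0 (sub_nonneg.2 hθ1) (add_sub_cancel θ 1)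
  simp only [smul_eq_mul, hs] at this
  nlinarith [mul_nonneg (sub_nonneg.2 hθ1) hωa]

lemma div_le_rpow_mul_of_lowerType
    (hlow : ∀ s : ℝ, 0 < s → ∀ t : ℝ, t ∈ Ioo (0:ℝ) 1 → ω (s * t) ≤ t ^ p * ω s)
    {s t : ℝ} (hs : 0 < s) (hst : s < t) :
    ω s / s ≤ s ^ (p - 1) * (ω t / t ^ p) := by
  have ht : 0 < t := hs.trans hst
  have h := hlow t ht (s / t) ⟨div_pos hs ht, (div_lt_one ht).2 hst⟩
  rw [mul_div_cancel₀ _ ht.ne', Real.div_rpow hs.le ht.le] at h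
  rw [div_le_iff₀ hs, Real.rpow_sub hs, Real.rpow_one]
  calc ω s ≤ s ^ p / t ^ p * ω t := h
    _ = s ^ p / s * (ω t / t ^ p) * s := by field_simp

lemma integral_Ioo_rpow_sub_one {t : ℝ} (hp : 0 < p) (ht : 0 ≤ t) :
    ∫ s in Ioo 0 t, s ^ (p - 1) = t ^ p / p := by
  rw [← integral_Ioc_eq_integral_Ioo, ← intervalIntegral.integral_of_le ht,
    integral_rpow (Or.inl (by linarith)), sub_add_cancel, Real.zero_rpow hp.ne', sub_zero]

lemma integrableOn_div_self_of_lowerType (hp : 0 < p) (hcont : ContinuousOn ω (Ioi 0))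
    (hpos : ∀ t : ℝ, 0 < t → 0 < ω t)
    (hlow : ∀ s : ℝ, 0 < s → ∀ t : ℝ, t ∈ Ioo (0:ℝ) 1 → ω (s * t) ≤ t ^ p * ω s)
    {t : ℝ} (ht : 0 < t) :
    IntegrableOn (fun s => ω s / s) (Ioo 0 t) := by
  have hg : IntegrableOn (fun s : ℝ => s ^ (p - 1) * (ω t / t ^ p)) (Ioo 0 t) :=
    ((intervalIntegral.integrableOn_Ioo_rpow_iff ht).2 (by linarith)).mul_const _
  refine hg.mono' ?_ ?_
  · exact ((hcont.mono fun s hs => hs.1).div continuousOn_id fun s hs => hs.1.ne')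
      |>.aestronglyMeasurable measurableSet_Ioo
  · filter_upwards [ae_restrict_mem measurableSet_Ioo] with s hs
    rw [Real.norm_of_nonneg (div_pos (hpos s hs.1) hs.1).le]
    exact div_le_rpow_mul_of_lowerType hlow hs.1 hs.2

lemma setIntegral_div_self_le_of_lowerType (hp : 0 < p)
    (hlow : ∀ s : ℝ, 0 < s → ∀ t : ℝ, t ∈ Ioo (0:ℝ) 1 → ω (s * t) ≤ t ^ p * ω s)
    {t : ℝ} (ht : 0 < t) (hint : IntegrableOn (fun s => ω s / s) (Ioo 0 t)) :
    ∫ s in Ioo 0 t, ω s / s ≤ ω t / p := by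
  have hg : IntegrableOn (fun s : ℝ => s ^ (p - 1) * (ω t / t ^ p)) (Ioo 0 t) :=
    ((intervalIntegral.integrableOn_Ioo_rpow_iff ht).2 (by linarith)).mul_const _
  calc ∫ s in Ioo 0 t, ω s / s
      ≤ ∫ s in Ioo 0 t, s ^ (p - 1) * (ω t / t ^ p) :=
        setIntegral_mono_on hint hg measurableSet_Ioo
          fun s hs => div_le_rpow_mul_of_lowerType hlow hs.1 hs.2
    _ = ω t / p := by
        rw [integral_mul_const, integral_Ioo_rpow_sub_one hp ht.le]
        field_simp [(Real.rpow_pos_of_pos ht p).ne']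

lemma div_six_le_setIntegral_div_self (hω : ConcaveOn ℝ (Ioi 0) ω)
    (hpos : ∀ t : ℝ, 0 < t → 0 < ω t)
    {t : ℝ} (ht : 0 < t) (hint : IntegrableOn (fun s => ω s / s) (Ioo 0 t)) :
    ω t / 6 ≤ ∫ s in Ioo 0 t, ω s / s := by
  have hbound : ∀ s ∈ Ioo (t / 2) t, ω t / (3 * t) ≤ ω s / s := by
    rintro s ⟨hs₁, hs₂⟩
    have hs : 0 < s := by linarith
    have hconc := hω.div_sub_mul_le (a := t / 4) (s := s) (mem_Ioi.2 (by linarith))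
      (mem_Ioi.2 ht) (hpos _ (by linarith)).le (by linarith) hs₂.le (by linarith)
    have hθ : 1 / 3 ≤ (s - t / 4) / (t - t / 4) := by
      rw [le_div_iff₀ (by linarith)]; linarith
    have : ω t / 3 ≤ ω s := by nlinarith [hpos t ht]
    rw [div_le_div_iff₀ (by positivity) hs]
    nlinarith [mul_le_mul_of_nonneg_left hs₂.le (hpos t ht).le]
  have hsub : Ioo (t / 2) t ⊆ Ioo 0 t := Ioo_subset_Ioo_left (by linarith)
  calc ω t / 6 = ω t / (3 * t) * volume.real (Ioo (t / 2) t) := by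
        rw [Real.volume_real_Ioo_of_le (by linarith)]; field_simp; ring
    _ ≤ ∫ s in Ioo (t / 2) t, ω s / s :=
        setIntegral_ge_of_const_le_real measurableSet_Ioo measure_Ioo_lt_top.ne hbound
          (hint.mono_set hsub)
    _ ≤ ∫ s in Ioo 0 t, ω s / s :=
        setIntegral_mono_set hint
          ((ae_restrict_mem measurableSet_Ioo).mono fun s hs => (div_pos (hpos s hs.1) hs.1).le)
          hsub.eventuallyLE

end

theorem tilde_omega_equivalent_general (ω : ℝ → ℝ) (p : ℝ) (hp0 : 0 < p)
    (hpos : ∀ t : ℝ, 0 < t → 0 < ω t)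
    (hconc : ∀ s t θ : ℝ, 0 < s → 0 < t → 0 ≤ θ → θ ≤ 1 →
      θ * ω s + (1 - θ) * ω t ≤ ω (θ * s + (1 - θ) * t))
    (hlow : ∀ s : ℝ, 0 < s → ∀ t : ℝ, t ∈ Set.Ioo (0:ℝ) 1 → ω (s * t) ≤ t ^ p * ω s) :
    (∀ t : ℝ, 0 < t → IntegrableOn (fun s => ω s / s) (Set.Ioo 0 t)) ∧
    ∃ C : ℝ, 1 ≤ C ∧ ∀ t : ℝ, 0 < t →
      C⁻¹ * ω t ≤ ∫ s in Set.Ioo (0:ℝ) t, ω s / s ∧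
      (∫ s in Set.Ioo (0:ℝ) t, ω s / s) ≤ C * ω t := by
  have hω := concaveOn_Ioi_of_forall_le hconc
  have hint : ∀ t : ℝ, 0 < t → IntegrableOn (fun s => ω s / s) (Ioo 0 t) := fun t ht =>
    integrableOn_div_self_of_lowerType hp0 (hω.continuousOn isOpen_Ioi) hpos hlow ht
  have hp' : 0 < 1 / p := by positivity
  refine ⟨hint, 6 + 1 / p, by linarith, fun t ht => ⟨?_, ?_⟩⟩
  · calc (6 + 1 / p)⁻¹ * ω t ≤ 6⁻¹ * ω t :=
          mul_le_mul_of_nonneg_right (inv_anti₀ (by norm_num) (by linarith)) (hpos t ht).le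
      _ = ω t / 6 := by ring
      _ ≤ _ := div_six_le_setIntegral_div_self hω hpos ht (hint t ht)
  · calc _ ≤ ω t / p := setIntegral_div_self_le_of_lowerType hp0 hlow ht (hint t ht)
      _ ≤ (6 + 1 / p) * ω t := by
          rw [div_eq_inv_mul, ← one_div]
          exact mul_le_mul_of_nonneg_right (by linarith) (hpos t ht).le

/-- `ω̃(t) = ∫₀ᵗ ω(s)/s ds` is finite and comparable to `ω`. -/
theorem tilde_omega_equivalent (ω : ℝ → ℝ) (p : ℝ) (hp0 : 0 < p) (hp1 : p ≤ 1)
    (hpos : ∀ t : ℝ, 0 < t → 0 < ω t)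
    (hconc : ∀ s t θ : ℝ, 0 < s → 0 < t → 0 ≤ θ → θ ≤ 1 →
      θ * ω s + (1 - θ) * ω t ≤ ω (θ * s + (1 - θ) * t))
    (hlow : ∀ s : ℝ, 0 < s → ∀ t : ℝ, t ∈ Set.Ioo (0:ℝ) 1 → ω (s * t) ≤ t ^ p * ω s) :
    (∀ t : ℝ, 0 < t → IntegrableOn (fun s => ω s / s) (Set.Ioo 0 t)) ∧
    ∃ C : ℝ, 1 ≤ C ∧ ∀ t : ℝ, 0 < t →
      C⁻¹ * ω t ≤ ∫ s in Set.Ioo (0:ℝ) t, ω s / s ∧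
      (∫ s in Set.Ioo (0:ℝ) t, ω s / s) ≤ C * ω t :=
  tilde_omega_equivalent_general ω p hp0 hpos hconc hlow
end

section
/- Let ω be concave of strictly lower type p ∈ (0,1] and ω̃(t) = ∫₀ᵗ ω(s)/s ds. Then ω̃ is strictly increasing, concave, and of strictly lower type p. -/
open MeasureTheory Set Filter Topology

/-!
Concavity of `ω` on `(0, ∞)` together with `ω ≥ 0` (letting the left endpoint of a chord tend
to `0`) makes `ω(s)/s` nonincreasing, so `ω̃` is the primitive of a positive nonincreasing
function, hence strictly increasing and concave. For the lower type, the substitution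
`s ↦ st` leaves `ds/s` invariant, so `ω̃(st) = ∫₀ˢ ω(ut)/u du ≤ tᵖ ω̃(s)`.
-/

theorem concaveOn_Ioi_zero_iff {f : ℝ → ℝ} :
    ConcaveOn ℝ (Ioi 0) f ↔ ∀ s t θ : ℝ, 0 < s → 0 < t → 0 ≤ θ → θ ≤ 1 →
      θ * f s + (1 - θ) * f t ≤ f (θ * s + (1 - θ) * t) := by
  refine ⟨fun h s t θ hs ht hθ0 hθ1 => h.2 hs ht hθ0 (by linarith) (by ring),
    fun h => ⟨convex_Ioi 0, fun s hs t ht a b ha hb hab => ?_⟩⟩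
  obtain rfl : b = 1 - a := by linarith
  exact h s t a hs ht ha (by linarith)

theorem ConcaveOn.antitoneOn_div_self {f : ℝ → ℝ} (hf : ConcaveOn ℝ (Ioi 0) f)
    (hnn : ∀ x, 0 < x → 0 ≤ f x) : AntitoneOn (fun x => f x / x) (Ioi 0) := by
  intro s hs t ht hst
  rcases hst.eq_or_lt with rfl | hst
  · rfl
  have hs : 0 < s := hs
  have hchord : ∀ ε ∈ Ioo 0 s, (f t - f s) / (t - s) ≤ f s / (s - ε) := fun ε hε =>
    (hf.slope_anti_adjacent hε.1 ht hε.2 hst).trans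
      (div_le_div_of_nonneg_right (by linarith [hnn ε hε.1]) (by linarith [hε.2]))
  have hlim : Tendsto (fun ε => f s / (s - ε)) (𝓝[>] 0) (𝓝 (f s / s)) := by
    have : ContinuousAt (fun ε => f s / (s - ε)) 0 :=
      continuousAt_const.div (by fun_prop) (by simpa using hs.ne')
    simpa using this.tendsto.mono_left nhdsWithin_le_nhds
  have hslope : (f t - f s) / (t - s) ≤ f s / s :=
    ge_of_tendsto hlim (eventually_of_mem (Ioo_mem_nhdsGT hs) hchord)
  rw [div_le_div_iff₀ (sub_pos.2 hst) hs] at hslope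
  show f t / t ≤ f s / s
  rw [div_le_div_iff₀ (hs.trans hst) hs]
  linarith

section Primitive

variable {g : ℝ → ℝ} {S : Set ℝ} {c : ℝ}

theorem strictMonoOn_intervalIntegral_of_pos (hS : S.OrdConnected)
    (hpos : ∀ x ∈ S, 0 < g x) (hint : ∀ x ∈ S, IntervalIntegrable g volume c x) :
    StrictMonoOn (fun x => ∫ t in c..x, g t) S := by
  intro x hx y hy hxy
  rw [← sub_pos, intervalIntegral.integral_interval_sub_left (hint y hy) (hint x hx)]
  exact intervalIntegral.intervalIntegral_pos_of_pos_on ((hint x hx).symm.trans (hint y hy))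
    (fun u hu => hpos u (hS.out hx hy (Ioo_subset_Icc_self hu))) hxy

theorem AntitoneOn.concaveOn_intervalIntegral (hS : Convex ℝ S) (hg : AntitoneOn g S)
    (hint : ∀ x ∈ S, IntervalIntegrable g volume c x) :
    ConcaveOn ℝ S (fun x => ∫ t in c..x, g t) := by
  refine concaveOn_of_slope_anti_adjacent hS fun {x y z} hx hz hxy hyz => ?_
  have hS' : S.OrdConnected := hS.ordConnected
  have hy : y ∈ S := hS'.out hx hz ⟨hxy.le, hyz.le⟩
  have hint' : ∀ {a b}, a ∈ S → b ∈ S → IntervalIntegrable g volume a b :=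
    fun ha hb => (hint _ ha).symm.trans (hint _ hb)
  simp only [intervalIntegral.integral_interval_sub_left (hint z hz) (hint y hy),
    intervalIntegral.integral_interval_sub_left (hint y hy) (hint x hx)]
  calc (∫ t in y..z, g t) / (z - y) ≤ (∫ _ in y..z, g y) / (z - y) := by
        gcongr
        exact intervalIntegral.integral_mono_on hyz.le (hint' hy hz) intervalIntegrable_const
          fun u hu => hg hy (hS'.out hy hz hu) hu.1
    _ = g y := by
        rw [intervalIntegral.integral_const, smul_eq_mul, mul_div_cancel_left₀ _ (by linarith)]
    _ = (∫ _ in x..y, g y) / (y - x) := by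
        rw [intervalIntegral.integral_const, smul_eq_mul, mul_div_cancel_left₀ _ (by linarith)]
    _ ≤ (∫ t in x..y, g t) / (y - x) := by
        gcongr
        exact intervalIntegral.integral_mono_on hxy.le intervalIntegrable_const (hint' hx hy)
          fun u hu => hg (hS'.out hx hy hu) hy hu.2

end Primitive

theorem div_self_comp_mul_right {g : ℝ → ℝ} {t : ℝ} (ht : t ≠ 0) (x : ℝ) :
    g (x * t) / x = t * (g (x * t) / (x * t)) := by
  rcases eq_or_ne x 0 with rfl | hx
  · simp
  · field_simp

theorem intervalIntegral_div_self_mul_le {g : ℝ → ℝ} {s t C : ℝ} (hs : 0 ≤ s) (ht : 0 < t)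
    (hint : IntervalIntegrable (fun x => g x / x) volume 0 (s * t))
    (hint' : IntervalIntegrable (fun x => g x / x) volume 0 s)
    (hle : ∀ x, 0 < x → x ≤ s → g (x * t) ≤ C * g x) :
    ∫ x in 0..s * t, g x / x ≤ C * ∫ x in 0..s, g x / x := by
  have hscale : (fun x => g (x * t) / x) = fun x => t * (g (x * t) / (x * t)) :=
    funext (div_self_comp_mul_right ht.ne')
  have hint_scaled : IntervalIntegrable (fun x => g (x * t) / x) volume 0 s := by
    have := (hint.comp_mul_right (c := t)).const_mul t
    rwa [zero_div, mul_div_cancel_right₀ _ ht.ne', ← hscale] at this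
  have hS'st : ∫ x in 0..s, g (x * t) / x = ∫ x in 0..s * t, g x / x := by
    rw [hscale, intervalIntegral.integral_const_mul,
      intervalIntegral.integral_comp_mul_right (fun y => g y / y) ht.ne', zero_mul, smul_eq_mul,
      mul_inv_cancel_left₀ ht.ne']
  rw [← hS'st, ← intervalIntegral.integral_const_mul]
  refine intervalIntegral.integral_mono_on hs hint_scaled (hint'.const_mul C) fun x hx => ?_
  rcases hx.1.eq_or_lt with rfl | hx0
  · simp
  · rw [← mul_div_assoc]
    exact div_le_div_of_nonneg_right (hle x hx0 hx.2) hx0.le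

theorem tilde_omega_properties_general (ω : ℝ → ℝ) (p : ℝ)
    (hpos : ∀ t : ℝ, 0 < t → 0 < ω t)
    (hconc : ∀ s t θ : ℝ, 0 < s → 0 < t → 0 ≤ θ → θ ≤ 1 →
      θ * ω s + (1 - θ) * ω t ≤ ω (θ * s + (1 - θ) * t))
    (hlow : ∀ s : ℝ, 0 < s → ∀ t : ℝ, t ∈ Set.Ioo (0:ℝ) 1 → ω (s * t) ≤ t ^ p * ω s)
    (ωt : ℝ → ℝ) (hωt : ∀ t : ℝ, 0 < t → ωt t = ∫ s in Set.Ioo (0:ℝ) t, ω s / s)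
    (hfin : ∀ t : ℝ, 0 < t → IntegrableOn (fun s => ω s / s) (Set.Ioo 0 t)) :
    StrictMonoOn ωt (Set.Ioi (0:ℝ)) ∧
    (∀ s t θ : ℝ, 0 < s → 0 < t → 0 ≤ θ → θ ≤ 1 →
      θ * ωt s + (1 - θ) * ωt t ≤ ωt (θ * s + (1 - θ) * t)) ∧
    (∀ s : ℝ, 0 < s → ∀ t : ℝ, t ∈ Set.Ioo (0:ℝ) 1 → ωt (s * t) ≤ t ^ p * ωt s) := by
  have hint : ∀ t ∈ Ioi (0:ℝ), IntervalIntegrable (fun s => ω s / s) volume 0 t := fun t ht =>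
    (intervalIntegrable_iff_integrableOn_Ioo_of_le (le_of_lt ht)).2 (hfin t ht)
  have hωt_eq : EqOn (fun t => ∫ s in 0..t, ω s / s) ωt (Ioi 0) := fun t ht => by
    dsimp only
    rw [hωt t ht, intervalIntegral.integral_of_le (le_of_lt ht), integral_Ioc_eq_integral_Ioo]
  have hanti : AntitoneOn (fun s => ω s / s) (Ioi 0) :=
    (concaveOn_Ioi_zero_iff.2 hconc).antitoneOn_div_self fun x hx => (hpos x hx).le
  refine ⟨?_, ?_, fun s hs t ht => ?_⟩
  · exact (strictMonoOn_intervalIntegral_of_pos ordConnected_Ioi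
      (fun x hx => div_pos (hpos x hx) hx) hint).congr hωt_eq
  · exact concaveOn_Ioi_zero_iff.1 ((hanti.concaveOn_intervalIntegral (convex_Ioi 0) hint).congr
      hωt_eq)
  · rw [← hωt_eq (mul_pos hs ht.1), ← hωt_eq hs]
    exact intervalIntegral_div_self_mul_le hs.le ht.1 (hint _ (mul_pos hs ht.1)) (hint s hs)
      fun x hx _ => hlow x hx t ht

/-- `ω̃(t) = ∫₀ᵗ ω(s)/s ds` is strictly increasing, concave, and of strictly lower type `p`. -/
theorem tilde_omega_properties (ω : ℝ → ℝ) (p : ℝ) (hp0 : 0 < p) (hp1 : p ≤ 1)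
    (hpos : ∀ t : ℝ, 0 < t → 0 < ω t)
    (hconc : ∀ s t θ : ℝ, 0 < s → 0 < t → 0 ≤ θ → θ ≤ 1 →
      θ * ω s + (1 - θ) * ω t ≤ ω (θ * s + (1 - θ) * t))
    (hlow : ∀ s : ℝ, 0 < s → ∀ t : ℝ, t ∈ Set.Ioo (0:ℝ) 1 → ω (s * t) ≤ t ^ p * ω s)
    (ωt : ℝ → ℝ) (hωt : ∀ t : ℝ, 0 < t → ωt t = ∫ s in Set.Ioo (0:ℝ) t, ω s / s)
    (hfin : ∀ t : ℝ, 0 < t → IntegrableOn (fun s => ω s / s) (Set.Ioo 0 t)) :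
    StrictMonoOn ωt (Set.Ioi (0:ℝ)) ∧
    (∀ s t θ : ℝ, 0 < s → 0 < t → 0 ≤ θ → θ ≤ 1 →
      θ * ωt s + (1 - θ) * ωt t ≤ ωt (θ * s + (1 - θ) * t)) ∧
    (∀ s : ℝ, 0 < s → ∀ t : ℝ, t ∈ Set.Ioo (0:ℝ) 1 → ωt (s * t) ≤ t ^ p * ωt s) :=
  tilde_omega_properties_general ω p hpos hconc hlow ωt hωt hfin
end

section
/- Let ω : (0,∞) → (0,∞) be continuous, strictly increasing, concave, of strictly lower type p_ω ∈ (0,1], and bijective onto (0,∞). Define ρ(t) = t^{-1}/ω^{-1}(t^{-1}). Then ρ is nonincreasing-type controlled: ρ is of upper type 1/p_ω − 1, i.e., there exists C > 0 such that ρ(st) ≤ C t^{1/p_ω − 1} ρ(s) for all t ≥ 1 and s > 0. -/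
/-! Strict lower type `p` of `ω` says `ω (s T) ≥ T ^ p ω s` for `T ≥ 1`; since `ω` is increasing this
dualises to `ω⁻¹ (y T) ≤ T ^ (1/p) ω⁻¹ y`. Writing `ρ s = s⁻¹ / ω⁻¹ (s⁻¹)` and `s⁻¹ = (s t)⁻¹ t`,
the latter gives `ρ (s t) ≤ t ^ (1/p - 1) ρ s`, so the constant is `1`. -/

section

variable {ω ωinv : ℝ → ℝ} {p : ℝ}

lemma rpow_mul_le_apply_mul
    (hlow : ∀ s : ℝ, 0 < s → ∀ t : ℝ, t ∈ Set.Ioo (0:ℝ) 1 → ω (s * t) ≤ t ^ p * ω s)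
    {s T : ℝ} (hs : 0 < s) (hT : 1 ≤ T) : T ^ p * ω s ≤ ω (s * T) := by
  rcases hT.eq_or_lt with rfl | hT
  · simp
  have hT0 : 0 < T := one_pos.trans hT
  have h := hlow (s * T) (by positivity) T⁻¹ ⟨inv_pos.2 hT0, inv_lt_one_of_one_lt₀ hT⟩
  rw [mul_inv_cancel_right₀ hT0.ne', Real.inv_rpow hT0.le] at h
  exact (le_inv_mul_iff₀ (Real.rpow_pos_of_pos hT0 p)).1 h

lemma inv_apply_mul_le_rpow_mul (hp : 0 < p) (hmono : StrictMonoOn ω (Set.Ioi 0))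
    (hup : ∀ s : ℝ, 0 < s → ∀ T : ℝ, 1 ≤ T → T ^ p * ω s ≤ ω (s * T))
    (hinv_pos : ∀ t : ℝ, 0 < t → 0 < ωinv t) (hinv : ∀ t : ℝ, 0 < t → ω (ωinv t) = t)
    {y T : ℝ} (hy : 0 < y) (hT : 1 ≤ T) : ωinv (y * T) ≤ T ^ (1 / p) * ωinv y := by
  have hT0 : 0 < T := one_pos.trans_le hT
  have hyT : 0 < y * T := by positivity
  have hTp : 1 ≤ T ^ (1 / p) := Real.one_le_rpow hT (by positivity)
  have key : ω (ωinv (y * T)) ≤ ω (ωinv y * T ^ (1 / p)) := by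
    calc ω (ωinv (y * T)) = (T ^ (1 / p)) ^ p * ω (ωinv y) := by
          rw [hinv _ hyT, hinv _ hy, ← Real.rpow_mul hT0.le, one_div_mul_cancel hp.ne',
            Real.rpow_one, mul_comm]
      _ ≤ ω (ωinv y * T ^ (1 / p)) := hup _ (hinv_pos y hy) _ hTp
  have hb : 0 < ωinv y * T ^ (1 / p) := mul_pos (hinv_pos y hy) (one_pos.trans_le hTp)
  rw [mul_comm (T ^ _)]
  exact (hmono.le_iff_le (hinv_pos _ hyT) hb).1 key

lemma inv_div_apply_inv_mul_le
    (hinv_pos : ∀ t : ℝ, 0 < t → 0 < ωinv t)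
    (hinv_up : ∀ y : ℝ, 0 < y → ∀ T : ℝ, 1 ≤ T → ωinv (y * T) ≤ T ^ (1 / p) * ωinv y)
    {s t : ℝ} (hs : 0 < s) (ht : 1 ≤ t) :
    (s * t)⁻¹ / ωinv (s * t)⁻¹ ≤ t ^ (1 / p - 1) * (s⁻¹ / ωinv s⁻¹) := by
  have ht0 : 0 < t := one_pos.trans_le ht
  have hst : 0 < (s * t)⁻¹ := by positivity
  have hs_inv : ωinv s⁻¹ ≤ t ^ (1 / p) * ωinv (s * t)⁻¹ := by
    have h := hinv_up _ hst t ht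
    rwa [show (s * t)⁻¹ * t = s⁻¹ by field_simp] at h
  calc (s * t)⁻¹ / ωinv (s * t)⁻¹ = t⁻¹ * t ^ (1 / p) * s⁻¹ / (t ^ (1 / p) * ωinv (s * t)⁻¹) := by
        field_simp
    _ ≤ t⁻¹ * t ^ (1 / p) * s⁻¹ / ωinv s⁻¹ :=
        div_le_div_of_nonneg_left (by positivity) (hinv_pos _ (inv_pos.2 hs)) hs_inv
    _ = t ^ (1 / p - 1) * (s⁻¹ / ωinv s⁻¹) := by
        rw [Real.rpow_sub_one ht0.ne']
        ring

end

theorem rho_upper_type_general (ω ωinv : ℝ → ℝ) (p : ℝ) (hp0 : 0 < p)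
    (hmono : StrictMonoOn ω (Set.Ioi (0:ℝ)))
    (hlow : ∀ s : ℝ, 0 < s → ∀ t : ℝ, t ∈ Set.Ioo (0:ℝ) 1 → ω (s * t) ≤ t ^ p * ω s)
    (hinv_pos : ∀ t : ℝ, 0 < t → 0 < ωinv t)
    (hinv₁ : ∀ t : ℝ, 0 < t → ω (ωinv t) = t)
    (ρ : ℝ → ℝ) (hρ : ∀ t : ℝ, 0 < t → ρ t = t⁻¹ / ωinv t⁻¹) :
    ∃ C : ℝ, 0 < C ∧ ∀ t : ℝ, 1 ≤ t → ∀ s : ℝ, 0 < s →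
      ρ (s * t) ≤ C * t ^ (1 / p - 1) * ρ s := by
  have hup (s : ℝ) (hs : 0 < s) (T : ℝ) (hT : 1 ≤ T) := rpow_mul_le_apply_mul hlow hs hT
  have hinv_up (y : ℝ) (hy : 0 < y) (T : ℝ) (hT : 1 ≤ T) :=
    inv_apply_mul_le_rpow_mul hp0 hmono hup hinv_pos hinv₁ hy hT
  refine ⟨1, one_pos, fun t ht s hs ↦ ?_⟩
  rw [hρ _ (by positivity), hρ s hs, one_mul]
  exact inv_div_apply_inv_mul_le hinv_pos hinv_up hs ht

/-- If `ω` is continuous, strictly increasing, concave, of strictly lower type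
`p_ω ∈ (0,1]` and bijective on `(0,∞)`, then `ρ(t) = t⁻¹/ω⁻¹(t⁻¹)` is of upper
type `1/p_ω - 1`. -/
theorem rho_upper_type (ω ωinv : ℝ → ℝ) (p : ℝ) (hp0 : 0 < p) (hp1 : p ≤ 1)
    (hcont : ContinuousOn ω (Set.Ioi (0:ℝ)))
    (hmono : StrictMonoOn ω (Set.Ioi (0:ℝ)))
    (hpos : ∀ t : ℝ, 0 < t → 0 < ω t)
    (hconc : ∀ s t θ : ℝ, 0 < s → 0 < t → 0 ≤ θ → θ ≤ 1 →
      θ * ω s + (1 - θ) * ω t ≤ ω (θ * s + (1 - θ) * t))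
    (hlow : ∀ s : ℝ, 0 < s → ∀ t : ℝ, t ∈ Set.Ioo (0:ℝ) 1 → ω (s * t) ≤ t ^ p * ω s)
    (hinv_pos : ∀ t : ℝ, 0 < t → 0 < ωinv t)
    (hinv₁ : ∀ t : ℝ, 0 < t → ω (ωinv t) = t)
    (hinv₂ : ∀ t : ℝ, 0 < t → ωinv (ω t) = t)
    (ρ : ℝ → ℝ) (hρ : ∀ t : ℝ, 0 < t → ρ t = t⁻¹ / ωinv t⁻¹) :
    ∃ C : ℝ, 0 < C ∧ ∀ t : ℝ, 1 ≤ t → ∀ s : ℝ, 0 < s →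
      ρ (s * t) ≤ C * t ^ (1 / p - 1) * ρ s :=
  rho_upper_type_general ω ωinv p hp0 hmono hlow hinv_pos hinv₁ ρ hρ
end
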